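/- Let X ~ NegativeBinomial(k, p) with k > 0, p ∈ (0,1), and let Y be a mixture of NB(k, t) distributions with respect to a probability measure μ on t ∈ (0,1). Then X ≤_st Y if and only if ∫ t^k dμ(t) ≤ p^k, and X ≤_lr Y if and only if p ≥ (∫ t^{k+1} dμ(t)) / (∫ t^k dμ(t)). -/

import Mathlib

/-!
Both the `NB(k, p)` pmf `f` and the mixture pmf `g` carry the factor `Γ(k+x)/(Γ(k) x!)`, so
`f x / g x = pᵏ (1-p)ˣ / A x` with `A x = ∫ tᵏ (1-t)ˣ dμ`. By Cauchy–Schwarz `A` is log-convex,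
i.e. `A (x+1) / A x` increases with `x`. Hence `f / g` is nonincreasing iff `1 - p ≤ A 1 / A 0`,
and `A 0 - A 1 = ∫ t^(k+1) dμ`.

For the stochastic order, `b x = A x / (1-p)ˣ` is log-convex as well and `f x < g x` iff
`pᵏ < b x`. If `b 0 = ∫ tᵏ dμ ≤ pᵏ`, a log-convex `b` that has risen above `b 0` never falls back,
so once `f < g` it stays so; two pmfs crossing at most once in this direction compare in every
tail. Conversely the tails beyond `0` are `1 - f 0` and `1 - g 0`. Both pmfs sum to `1` by the
binomial series `∑ C(k+x-1, x) qˣ = (1-q)^(-k)`.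
-/

open MeasureTheory Set

/-- The pmf of the negative binomial distribution `NB(k, p)` at `x`, where `k > 0`
need not be an integer: `Γ(k+x)/(Γ(k) x!) pᵏ (1−p)ˣ`. -/
noncomputable def nbPMF (k p : ℝ) (x : ℕ) : ℝ :=
  Real.Gamma (k + x) / (Real.Gamma k * x.factorial) * p ^ k * (1 - p) ^ x

open Polynomial in
theorem Real.Gamma_add_nat_eq_mul_ascPochhammer {s : ℝ} (hs : ∀ m : ℕ, s ≠ -m) (n : ℕ) :
    Real.Gamma (s + n) = Real.Gamma s * (ascPochhammer ℝ n).eval s := by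
  induction n with
  | zero => simp
  | succ n ih =>
    have hsn : s + n ≠ 0 := fun h => hs n (by linarith)
    rw [Nat.cast_succ, ← add_assoc, Real.Gamma_add_one hsn, ih, ascPochhammer_succ_eval]
    ring

theorem Real.Gamma_add_nat_div_eq_choose {s : ℝ} (hs : ∀ m : ℕ, s ≠ -m) (n : ℕ) :
    Real.Gamma (s + n) / (Real.Gamma s * n.factorial) = Ring.choose (s + n - 1) n := by
  have hΓ : Real.Gamma s ≠ 0 := Real.Gamma_ne_zero hs
  have hfac : (n.factorial : ℝ) ≠ 0 := by positivity
  rw [← Ring.multichoose_eq, Real.Gamma_add_nat_eq_mul_ascPochhammer hs,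
    ← Polynomial.ascPochhammer_smeval_eq_eval, ← Ring.factorial_nsmul_multichoose_eq_ascPochhammer,
    nsmul_eq_mul]
  field_simp

theorem hasSum_choose_mul_pow (a : ℝ) {x : ℝ} (hx : |x| < 1) :
    HasSum (fun n : ℕ => Ring.choose (a + n - 1) n * x ^ n) (1 / (1 - x) ^ a) := by
  have h := (Real.one_div_one_sub_rpow_hasFPowerSeriesOnBall_zero a).hasSum
    (y := x) (by simpa [enorm_eq_nnnorm, ← NNReal.coe_lt_coe] using hx)
  simpa [FormalMultilinearSeries.ofScalars_apply_eq, mul_comm] using h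

theorem hasSum_ite_lt {G : Type*} [AddCommGroup G] [TopologicalSpace G] [IsTopologicalAddGroup G]
    {f : ℕ → G} {s : G} (hf : HasSum f s) (m : ℕ) :
    HasSum (fun x => if m < x then f x else 0) (s - ∑ x ∈ Finset.range (m + 1), f x) := by
  rw [← hasSum_nat_add_iff' (m + 1)]
  have hhead : ∑ x ∈ Finset.range (m + 1), (if m < x then f x else 0) = 0 :=
    Finset.sum_eq_zero fun x hx => if_neg (by simpa [Nat.lt_succ_iff] using hx)
  simpa only [hhead, sub_zero, show ∀ n, m < n + (m + 1) by omega, if_true] using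
    (hasSum_nat_add_iff' (m + 1)).2 hf

theorem tsum_ite_lt_le_of_crossing {f g : ℕ → ℝ} {s : ℝ} (hf : HasSum f s) (hg : HasSum g s)
    (hcross : ∀ x y, x ≤ y → f x < g x → f y ≤ g y) (m : ℕ) :
    (∑' x, if m < x then f x else 0) ≤ ∑' x, if m < x then g x else 0 := by
  rw [(hasSum_ite_lt hf m).tsum_eq, (hasSum_ite_lt hg m).tsum_eq]
  by_cases h : ∃ x₀ ≤ m, f x₀ < g x₀
  · obtain ⟨x₀, hx₀m, hx₀⟩ := h
    refine hasSum_le (fun x => ?_) (hasSum_ite_lt hf m) (hasSum_ite_lt hg m)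
    split_ifs with hx
    · exact hcross x₀ x (by omega) hx₀
    · exact le_rfl
  · push Not at h
    have := Finset.sum_le_sum fun x hx => h x (Nat.lt_succ_iff.1 (Finset.mem_range.1 hx))
    linarith

theorem monotone_succ_div_of_sq_le {a : ℕ → ℝ} (ha : ∀ n, 0 < a n)
    (hsq : ∀ n, a (n + 1) ^ 2 ≤ a n * a (n + 2)) : Monotone fun n => a (n + 1) / a n := by
  refine monotone_nat_of_le_succ fun n => ?_
  rw [div_le_div_iff₀ (ha n) (ha (n + 1))]
  nlinarith [hsq n]

theorem le_of_monotone_succ_div {b : ℕ → ℝ} (hb : ∀ n, 0 < b n)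
    (hρ : Monotone fun n => b (n + 1) / b n) {x y : ℕ} (hx : b 0 < b x) (hxy : x ≤ y) :
    b x ≤ b y := by
  cases x with
  | zero => exact absurd hx (lt_irrefl _)
  | succ x =>
    -- if the ratio were `≤ 1` at `x`, it would be `≤ 1` before `x` too, and `b (x + 1) ≤ b 0`
    have hrise : 1 < b (x + 1) / b x := by
      by_contra! hfall
      have hdesc : ∀ n ≤ x + 1, b n ≤ b 0 := by
        intro n hn
        induction n with
        | zero => exact le_rfl
        | succ n ih =>
          exact ((div_le_one (hb n)).1 ((hρ (by omega : n ≤ x)).trans hfall)).trans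
            (ih (by omega))
      exact absurd (hdesc (x + 1) le_rfl) (not_le.2 hx)
    refine monotoneOn_nat_Ici_of_le_succ (k := x) (fun n hn => ?_) (by simp) (by simp; omega) hxy
    exact (one_le_div (hb n)).1 (hrise.le.trans (hρ hn))

theorem antitone_mul_pow_div_iff {a : ℕ → ℝ} (ha : ∀ n, 0 < a n)
    (hρ : Monotone fun n => a (n + 1) / a n) {c q : ℝ} (hc : 0 < c) (hq : 0 < q) :
    Antitone (fun n => c * q ^ n / a n) ↔ q ≤ a 1 / a 0 := by
  have hstep : ∀ n, c * q ^ (n + 1) / a (n + 1) ≤ c * q ^ n / a n ↔ q ≤ a (n + 1) / a n := by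
    intro n
    rw [div_le_div_iff₀ (ha _) (ha _), le_div_iff₀ (ha n), pow_succ]
    constructor <;> intro h <;> nlinarith [pow_pos hq n, mul_pos hc (pow_pos hq n)]
  constructor
  · exact fun h => (hstep 0).1 (h (Nat.le_succ 0))
  · exact fun h => antitone_nat_of_succ_le fun n => (hstep n).2 (h.trans (hρ (Nat.zero_le n)))

theorem sq_integral_mul_le {α : Type*} [MeasurableSpace α] {μ : Measure α} {w u : α → ℝ}
    (hw : 0 ≤ᵐ[μ] w) (hw_int : Integrable w μ) (hwu : Integrable (fun a => w a * u a) μ)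
    (hwu2 : Integrable (fun a => w a * u a ^ 2) μ) :
    (∫ a, w a * u a ∂μ) ^ 2 ≤ (∫ a, w a ∂μ) * ∫ a, w a * u a ^ 2 ∂μ := by
  have hquad : ∀ c : ℝ, 0 ≤ (∫ a, w a ∂μ) * (c * c) + (-2 * ∫ a, w a * u a ∂μ) * c
      + ∫ a, w a * u a ^ 2 ∂μ := by
    intro c
    have hexpand : ∫ a, w a * (c - u a) ^ 2 ∂μ = (∫ a, w a ∂μ) * (c * c)
        + (-2 * ∫ a, w a * u a ∂μ) * c + ∫ a, w a * u a ^ 2 ∂μ := by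
      have h : ∀ a, w a * (c - u a) ^ 2 = c * c * w a + -2 * c * (w a * u a) + w a * u a ^ 2 :=
        fun a => by ring
      have hlin : Integrable (fun a => c * c * w a + -2 * c * (w a * u a)) μ :=
        (hw_int.const_mul _).add (hwu.const_mul _)
      simp_rw [h]
      rw [integral_add hlin hwu2, integral_add (hw_int.const_mul _) (hwu.const_mul _),
        integral_const_mul, integral_const_mul]
      ring
    rw [← hexpand]
    exact integral_nonneg_of_ae (hw.mono fun a ha => mul_nonneg ha (sq_nonneg _))
  have := discrim_le_zero hquad
  rw [discrim] at this
  linarith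

theorem rpow_mul_one_sub_pow_pos {t : ℝ} (ht : t ∈ Ioo (0 : ℝ) 1) (k : ℝ) (x : ℕ) :
    0 < t ^ k * (1 - t) ^ x :=
  mul_pos (Real.rpow_pos_of_pos ht.1 k) (pow_pos (sub_pos.2 ht.2) x)

theorem integrable_rpow_mul_one_sub_pow {μ : Measure ℝ} [IsFiniteMeasure μ]
    (hμ : ∀ᵐ t ∂μ, t ∈ Ioo (0 : ℝ) 1) {k : ℝ} (hk : 0 ≤ k) (x : ℕ) :
    Integrable (fun t : ℝ => t ^ k * (1 - t) ^ x) μ := by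
  refine (integrable_const (1 : ℝ)).mono' (by fun_prop) (hμ.mono fun t ht => ?_)
  have h1t : 0 ≤ 1 - t := by linarith [ht.2]
  rw [Real.norm_of_nonneg (rpow_mul_one_sub_pow_pos ht k x).le]
  exact mul_le_one₀ (Real.rpow_le_one ht.1.le ht.2.le hk) (pow_nonneg h1t x)
    (pow_le_one₀ h1t (by linarith [ht.1]))

noncomputable def nbCoeff (k : ℝ) (x : ℕ) : ℝ :=
  Real.Gamma (k + x) / (Real.Gamma k * x.factorial)

noncomputable def nbMixMoment (k : ℝ) (μ : Measure ℝ) (x : ℕ) : ℝ :=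
  ∫ t, t ^ k * (1 - t) ^ x ∂μ

theorem nbCoeff_pos {k : ℝ} (hk : 0 < k) (x : ℕ) : 0 < nbCoeff k x :=
  div_pos (Real.Gamma_pos_of_pos (by positivity))
    (mul_pos (Real.Gamma_pos_of_pos hk) (by positivity))

theorem nbCoeff_zero {k : ℝ} (hk : 0 < k) : nbCoeff k 0 = 1 := by
  simp [nbCoeff, (Real.Gamma_pos_of_pos hk).ne']

theorem nbPMF_eq_nbCoeff_mul (k p : ℝ) (x : ℕ) :
    nbPMF k p x = nbCoeff k x * (p ^ k * (1 - p) ^ x) := by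
  rw [nbPMF, nbCoeff]
  ring

theorem hasSum_nbPMF {k t : ℝ} (hk : 0 < k) (ht₀ : 0 < t) (ht₂ : t < 2) :
    HasSum (nbPMF k t) 1 := by
  have hk' : ∀ m : ℕ, k ≠ -m := fun m h => by linarith [(Nat.cast_nonneg m : (0 : ℝ) ≤ m)]
  have h := (hasSum_choose_mul_pow k (x := 1 - t)
    (by rw [abs_lt]; constructor <;> linarith)).mul_left (t ^ k)
  rw [sub_sub_cancel, mul_one_div_cancel (Real.rpow_pos_of_pos ht₀ k).ne'] at h
  refine (funext fun x => ?_ : nbPMF k t = _) ▸ h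
  rw [nbPMF_eq_nbCoeff_mul, nbCoeff, Real.Gamma_add_nat_div_eq_choose hk']
  ring

theorem integral_nbPMF (k : ℝ) (μ : Measure ℝ) (x : ℕ) :
    ∫ t, nbPMF k t x ∂μ = nbCoeff k x * nbMixMoment k μ x := by
  simp only [nbPMF_eq_nbCoeff_mul, integral_const_mul, nbMixMoment]

section Mixture

variable {k p : ℝ} {μ : Measure ℝ}

theorem nbMixMoment_zero : nbMixMoment k μ 0 = ∫ t, t ^ k ∂μ := by
  simp [nbMixMoment]

theorem nbMixMoment_pos [IsFiniteMeasure μ] [NeZero μ] (hμ : ∀ᵐ t ∂μ, t ∈ Ioo (0 : ℝ) 1)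
    (hk : 0 ≤ k) (x : ℕ) : 0 < nbMixMoment k μ x := by
  have hpos : ∀ᵐ t ∂μ, 0 < t ^ k * (1 - t) ^ x :=
    hμ.mono fun t ht => rpow_mul_one_sub_pow_pos ht k x
  have hsupp : Function.support (fun t : ℝ => t ^ k * (1 - t) ^ x) ∈ ae μ :=
    hpos.mono fun t ht => ht.ne'
  rw [nbMixMoment, integral_pos_iff_support_of_nonneg_ae (hpos.mono fun t ht => ht.le)
    (integrable_rpow_mul_one_sub_pow hμ hk x), measure_congr (ae_eq_univ.2 (mem_ae_iff.1 hsupp))]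
  exact Measure.measure_univ_pos.2 (NeZero.ne μ)

theorem nbMixMoment_sq_le [IsFiniteMeasure μ] (hμ : ∀ᵐ t ∂μ, t ∈ Ioo (0 : ℝ) 1)
    (hk : 0 ≤ k) (x : ℕ) :
    nbMixMoment k μ (x + 1) ^ 2 ≤ nbMixMoment k μ x * nbMixMoment k μ (x + 2) := by
  have h := sq_integral_mul_le (u := fun t => 1 - t)
    (hμ.mono fun t ht => (rpow_mul_one_sub_pow_pos ht k x).le)
    (integrable_rpow_mul_one_sub_pow hμ hk x) ?_ ?_
  · simpa only [nbMixMoment, mul_assoc, ← pow_succ, ← pow_add] using h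
  · simpa only [mul_assoc, ← pow_succ] using integrable_rpow_mul_one_sub_pow hμ hk (x + 1)
  · simpa only [mul_assoc, ← pow_add] using integrable_rpow_mul_one_sub_pow hμ hk (x + 2)

theorem monotone_nbMixMoment_succ_div [IsFiniteMeasure μ] [NeZero μ]
    (hμ : ∀ᵐ t ∂μ, t ∈ Ioo (0 : ℝ) 1) (hk : 0 ≤ k) :
    Monotone fun x => nbMixMoment k μ (x + 1) / nbMixMoment k μ x :=
  monotone_succ_div_of_sq_le (nbMixMoment_pos hμ hk) (nbMixMoment_sq_le hμ hk)

theorem integral_rpow_add_one [IsFiniteMeasure μ] (hμ : ∀ᵐ t ∂μ, t ∈ Ioo (0 : ℝ) 1)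
    (hk : 0 ≤ k) : ∫ t, t ^ (k + 1) ∂μ = nbMixMoment k μ 0 - nbMixMoment k μ 1 := by
  rw [nbMixMoment, nbMixMoment, ← integral_sub (integrable_rpow_mul_one_sub_pow hμ hk 0)
    (integrable_rpow_mul_one_sub_pow hμ hk 1)]
  refine integral_congr_ae (hμ.mono fun t ht => ?_)
  simp only [Real.rpow_add_one ht.1.ne']
  ring

theorem hasSum_integral_nbPMF [IsProbabilityMeasure μ] (hμ : ∀ᵐ t ∂μ, t ∈ Ioo (0 : ℝ) 1)
    (hk : 0 < k) : HasSum (fun x => ∫ t, nbPMF k t x ∂μ) 1 := by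
  have hsum : ∀ᵐ t ∂μ, HasSum (fun x => nbPMF k t x) 1 :=
    hμ.mono fun t ht => hasSum_nbPMF hk ht.1 (by linarith [ht.2])
  have hnonneg : ∀ x, ∀ᵐ t ∂μ, 0 ≤ nbPMF k t x := fun x => hμ.mono fun t ht => by
    rw [nbPMF_eq_nbCoeff_mul]
    exact mul_nonneg (nbCoeff_pos hk x).le (rpow_mul_one_sub_pow_pos ht k x).le
  have h := hasSum_integral_of_dominated_convergence (F := fun x t => nbPMF k t x)
    (fun x t => nbPMF k t x) (fun x => by unfold nbPMF; fun_prop)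
    (fun x => (hnonneg x).mono fun t ht => (Real.norm_of_nonneg ht).le)
    (hsum.mono fun t ht => ht.summable)
    ((integrable_const (1 : ℝ)).congr (hsum.mono fun t ht => ht.tsum_eq.symm)) hsum
  simpa using h

theorem nbPMF_tail_le_mixture_iff [IsProbabilityMeasure μ] (hμ : ∀ᵐ t ∂μ, t ∈ Ioo (0 : ℝ) 1)
    (hk : 0 < k) (hp : p ∈ Ioo (0 : ℝ) 1) :
    (∀ m : ℕ, (∑' x : ℕ, if m < x then nbPMF k p x else 0) ≤
        ∑' x : ℕ, if m < x then ∫ t, nbPMF k t x ∂μ else 0) ↔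
      ∫ t, t ^ k ∂μ ≤ p ^ k := by
  have hf := hasSum_nbPMF hk hp.1 (by linarith [hp.2])
  have hg := hasSum_integral_nbPMF hμ hk
  constructor
  · intro h
    have h0 := h 0
    rw [(hasSum_ite_lt hf 0).tsum_eq, (hasSum_ite_lt hg 0).tsum_eq] at h0
    simp only [zero_add, Finset.sum_range_one, nbPMF_eq_nbCoeff_mul, nbCoeff_zero hk, pow_zero,
      one_mul, mul_one] at h0
    linarith
  · intro h0
    rw [← nbMixMoment_zero] at h0
    set b : ℕ → ℝ := fun n => nbMixMoment k μ n / (1 - p) ^ n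
    have hq : 0 < 1 - p := sub_pos.2 hp.2
    have hb : ∀ n, 0 < b n := fun n => div_pos (nbMixMoment_pos hμ hk.le n) (pow_pos hq n)
    have hρ : Monotone fun n => b (n + 1) / b n := by
      have hb_ratio : (fun n => b (n + 1) / b n) =
          fun n => nbMixMoment k μ (n + 1) / nbMixMoment k μ n / (1 - p) := funext fun n => by
        have := (nbMixMoment_pos hμ hk.le n).ne'
        simp only [b]
        field_simp
        ring
      rw [hb_ratio]
      exact (monotone_nbMixMoment_succ_div hμ hk.le).div_const hq.le
    have hlt_iff : ∀ x, nbPMF k p x < ∫ t, nbPMF k t x ∂μ ↔ p ^ k < b x := fun x => by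
      rw [integral_nbPMF, nbPMF_eq_nbCoeff_mul, mul_lt_mul_iff_right₀ (nbCoeff_pos hk x),
        lt_div_iff₀ (pow_pos hq x)]
    refine tsum_ite_lt_le_of_crossing hf hg fun x y hxy hx => ?_
    have hbx := (hlt_iff x).1 hx
    have hb0 : b 0 < b x := by simpa [b] using h0.trans_lt hbx
    exact ((hlt_iff y).2 (hbx.trans_le (le_of_monotone_succ_div hb hρ hb0 hxy))).le

theorem nbPMF_div_mixture_antitone_iff [IsProbabilityMeasure μ]
    (hμ : ∀ᵐ t ∂μ, t ∈ Ioo (0 : ℝ) 1) (hk : 0 < k) (hp : p ∈ Ioo (0 : ℝ) 1) :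
    Antitone (fun x : ℕ => nbPMF k p x / ∫ t, nbPMF k t x ∂μ) ↔
      (∫ t, t ^ (k + 1) ∂μ) / (∫ t, t ^ k ∂μ) ≤ p := by
  have hA := nbMixMoment_pos hμ hk.le
  have hratio : (fun x : ℕ => nbPMF k p x / ∫ t, nbPMF k t x ∂μ) =
      fun x => p ^ k * (1 - p) ^ x / nbMixMoment k μ x := funext fun x => by
    rw [integral_nbPMF, nbPMF_eq_nbCoeff_mul, mul_div_mul_left _ _ (nbCoeff_pos hk x).ne',
      mul_div_assoc]
  rw [hratio, antitone_mul_pow_div_iff hA (monotone_nbMixMoment_succ_div hμ hk.le)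
    (Real.rpow_pos_of_pos hp.1 k) (sub_pos.2 hp.2), integral_rpow_add_one hμ hk.le,
    ← nbMixMoment_zero, sub_div, div_self (hA 0).ne']
  constructor <;> intro h <;> linarith

end Mixture

/-- Example 3: let `X ~ NB(k, p)`, `k > 0`, `p ∈ (0,1)`, and let `Y` be a mixture of
`NB(k, t)` distributions with respect to a probability measure `μ` on `(0, 1)`. Then
`X ≤_st Y` iff `∫ tᵏ dμ(t) ≤ pᵏ`, and `X ≤_lr Y` iff
`p ≥ (∫ t^{k+1} dμ(t)) / (∫ tᵏ dμ(t))`. -/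
theorem stmt_13 (k p : ℝ) (hk : 0 < k) (hp : p ∈ Ioo (0 : ℝ) 1)
    (μ : Measure ℝ) [IsProbabilityMeasure μ] (hμ : μ (Ioo (0 : ℝ) 1)ᶜ = 0) :
    ((∀ m : ℕ,
        (∑' x : ℕ, if m < x then nbPMF k p x else 0) ≤
        ∑' x : ℕ, if m < x then ∫ t, nbPMF k t x ∂μ else 0) ↔
      ∫ t, t ^ k ∂μ ≤ p ^ k) ∧
    (Antitone (fun x : ℕ => nbPMF k p x / ∫ t, nbPMF k t x ∂μ) ↔
      (∫ t, t ^ (k + 1) ∂μ) / (∫ t, t ^ k ∂μ) ≤ p) :=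
  ⟨nbPMF_tail_le_mixture_iff (mem_ae_iff.2 hμ) hk hp,
    nbPMF_div_mixture_antitone_iff (mem_ae_iff.2 hμ) hk hp⟩
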